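/- Let (φ, ψ, θ, P) be a classical solution of the vertically-damped thermodiffusive Bresse–Timoshenko system with Dirichlet boundary conditions, and define F₁(t) = −(μ/2) ∫₀ᴸ φ_t² dx − κ ∫₀ᴸ φ_tx φ_x dx. Then there exists a constant c > 0, depending only on the coefficients and L, such that for every ε₁ > 0 and every t > 0, F₁′(t) ≤ −κ ∫₀ᴸ φ_tx² dx + ε₁ ∫₀ᴸ ψ_x² dx + c (1 + 1/ε₁) ∫₀ᴸ φ_tt² dx. -/

import Mathlib

open Real intervalIntegral

/-- Spatial partial derivative of a function of `(x, t)`. -/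
noncomputable def pdx (f : ℝ → ℝ → ℝ) : ℝ → ℝ → ℝ := fun x t => deriv (fun y => f y t) x

/-- Temporal partial derivative of a function of `(x, t)`. -/
noncomputable def pdt (f : ℝ → ℝ → ℝ) : ℝ → ℝ → ℝ := fun x t => deriv (fun s => f x s) t

/-- Classical solution of the vertically-damped thermodiffusive
Bresse–Timoshenko system with Dirichlet boundary conditions. -/
def IsSolutionV (L ρ1 ρ2 κ α ξ1 ξ2 τ0 δ r h μ d : ℝ) (φ ψ θ P : ℝ → ℝ → ℝ) : Prop :=
  ContDiff ℝ (⊤ : ℕ∞) (Function.uncurry φ) ∧ ContDiff ℝ (⊤ : ℕ∞) (Function.uncurry ψ) ∧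
  ContDiff ℝ (⊤ : ℕ∞) (Function.uncurry θ) ∧ ContDiff ℝ (⊤ : ℕ∞) (Function.uncurry P) ∧
  (∀ x ∈ Set.Ioo (0:ℝ) L, ∀ t > (0:ℝ),
    ρ1 * pdt (pdt φ) x t - κ * pdx (fun y s => pdx φ y s + ψ y s) x t + μ * pdt φ x t = 0 ∧
    -(ρ2 * pdx (pdt (pdt φ)) x t) - α * pdx (pdx ψ) x t + κ * (pdx φ x t + ψ x t)
        - ξ1 * pdx θ x t - ξ2 * pdx P x t = 0 ∧
    τ0 * pdt θ x t + d * pdt P x t - δ * pdx (pdx θ) x t - ξ1 * pdx (pdt ψ) x t = 0 ∧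
    d * pdt θ x t + r * pdt P x t - h * pdx (pdx P) x t - ξ2 * pdx (pdt ψ) x t = 0) ∧
  (∀ t ≥ (0:ℝ),
    φ 0 t = 0 ∧ φ L t = 0 ∧ ψ 0 t = 0 ∧ ψ L t = 0 ∧
    θ 0 t = 0 ∧ θ L t = 0 ∧ P 0 t = 0 ∧ P L t = 0)

section Helpers

open Function Metric MeasureTheory

variable {f : ℝ → ℝ → ℝ}

lemma contDiff_slice_x (hf : ContDiff ℝ (⊤ : ℕ∞) (Function.uncurry f)) (t : ℝ) :
    ContDiff ℝ (⊤ : ℕ∞) fun y => f y t :=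
  hf.comp (contDiff_id.prodMk contDiff_const)

lemma contDiff_slice_t (hf : ContDiff ℝ (⊤ : ℕ∞) (Function.uncurry f)) (x : ℝ) :
    ContDiff ℝ (⊤ : ℕ∞) fun s => f x s :=
  hf.comp (contDiff_const.prodMk contDiff_id)

lemma hasDerivAt_slice_x (hf : ContDiff ℝ (⊤ : ℕ∞) (Function.uncurry f)) (x t : ℝ) :
    HasDerivAt (fun y => f y t) (pdx f x t) x :=
  (((contDiff_slice_x hf t).differentiable (by simp)) x).hasDerivAt

lemma hasDerivAt_slice_t (hf : ContDiff ℝ (⊤ : ℕ∞) (Function.uncurry f)) (x t : ℝ) :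
    HasDerivAt (fun s => f x s) (pdt f x t) t :=
  (((contDiff_slice_t hf x).differentiable (by simp)) t).hasDerivAt

lemma pdx_eq_fderiv (hf : ContDiff ℝ (⊤ : ℕ∞) (Function.uncurry f)) (x t : ℝ) :
    pdx f x t = fderiv ℝ (Function.uncurry f) (x, t) (1, 0) := by
  have h1 : HasDerivAt (fun y : ℝ => (y, t)) ((1:ℝ), (0:ℝ)) x :=
    (hasDerivAt_id x).prodMk (hasDerivAt_const x t)
  have h : HasDerivAt (fun y => f y t) (fderiv ℝ (Function.uncurry f) (x, t) (1, 0)) x :=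
    ((hf.differentiable (by simp) (x, t)).hasFDerivAt.comp_hasDerivAt x h1 :)
  exact h.deriv

lemma pdt_eq_fderiv (hf : ContDiff ℝ (⊤ : ℕ∞) (Function.uncurry f)) (x t : ℝ) :
    pdt f x t = fderiv ℝ (Function.uncurry f) (x, t) (0, 1) := by
  have h1 : HasDerivAt (fun s : ℝ => (x, s)) ((0:ℝ), (1:ℝ)) t :=
    (hasDerivAt_const t x).prodMk (hasDerivAt_id t)
  have h : HasDerivAt (fun s => f x s) (fderiv ℝ (Function.uncurry f) (x, t) (0, 1)) t :=
    ((hf.differentiable (by simp) (x, t)).hasFDerivAt.comp_hasDerivAt t h1)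
  exact h.deriv

lemma contDiff_pdx (hf : ContDiff ℝ (⊤ : ℕ∞) (Function.uncurry f)) :
    ContDiff ℝ (⊤ : ℕ∞) (Function.uncurry (pdx f)) := by
  have h : Function.uncurry (pdx f) = fun p : ℝ × ℝ => fderiv ℝ (Function.uncurry f) p (1, 0) := by
    funext p
    exact pdx_eq_fderiv hf p.1 p.2
  rw [h]
  exact (hf.fderiv_right (by simp)).clm_apply contDiff_const

lemma contDiff_pdt (hf : ContDiff ℝ (⊤ : ℕ∞) (Function.uncurry f)) :
    ContDiff ℝ (⊤ : ℕ∞) (Function.uncurry (pdt f)) := by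
  have h : Function.uncurry (pdt f) = fun p : ℝ × ℝ => fderiv ℝ (Function.uncurry f) p (0, 1) := by
    funext p
    exact pdt_eq_fderiv hf p.1 p.2
  rw [h]
  exact (hf.fderiv_right (by simp)).clm_apply contDiff_const

lemma pdx_pdt_comm (hf : ContDiff ℝ (⊤ : ℕ∞) (Function.uncurry f)) (x t : ℝ) :
    pdx (pdt f) x t = pdt (pdx f) x t := by
  have hdF : Differentiable ℝ (Function.uncurry f) := hf.differentiable (by simp)
  have hd2 : Differentiable ℝ (fderiv ℝ (Function.uncurry f)) :=
    (hf.fderiv_right (m := (⊤ : ℕ∞)) (by simp)).differentiable (by simp)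
  set G := fderiv ℝ (fderiv ℝ (Function.uncurry f)) (x, t) with hG
  have hsymm : ∀ v w, G v w = G w v :=
    second_derivative_symmetric (fun y => (hdF y).hasFDerivAt) ((hd2 (x, t)).hasFDerivAt)
  have key : ∀ v : ℝ × ℝ,
      HasDerivAt (fun y => fderiv ℝ (Function.uncurry f) (y, t) v) (G (1, 0) v) x ∧
      HasDerivAt (fun s => fderiv ℝ (Function.uncurry f) (x, s) v) (G (0, 1) v) t := by
    intro v
    have happ : HasFDerivAt (fun p => fderiv ℝ (Function.uncurry f) p v)
        ((ContinuousLinearMap.apply ℝ ℝ v).comp G) (x, t) :=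
      (ContinuousLinearMap.apply ℝ ℝ v).hasFDerivAt.comp (x, t) ((hd2 (x, t)).hasFDerivAt)
    constructor
    · have h1 : HasDerivAt (fun y : ℝ => (y, t)) ((1:ℝ), (0:ℝ)) x :=
        (hasDerivAt_id x).prodMk (hasDerivAt_const x t)
      exact happ.comp_hasDerivAt x h1
    · have h1 : HasDerivAt (fun s : ℝ => (x, s)) ((0:ℝ), (1:ℝ)) t :=
        (hasDerivAt_const t x).prodMk (hasDerivAt_id t)
      exact happ.comp_hasDerivAt t h1
  have e1 : pdx (pdt f) x t = G (1, 0) (0, 1) := by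
    show deriv (fun y => pdt f y t) x = _
    have h : (fun y => pdt f y t) = fun y => fderiv ℝ (Function.uncurry f) (y, t) (0, 1) := by
      funext y; exact pdt_eq_fderiv hf y t
    rw [h]
    exact ((key (0, 1)).1).deriv
  have e2 : pdt (pdx f) x t = G (0, 1) (1, 0) := by
    show deriv (fun s => pdx f x s) t = _
    have h : (fun s => pdx f x s) = fun s => fderiv ℝ (Function.uncurry f) (x, s) (1, 0) := by
      funext s; exact pdx_eq_fderiv hf x s
    rw [h]
    exact ((key (1, 0)).2).deriv
  rw [e1, e2, hsymm]

lemma hasDerivAt_intInt {g : ℝ → ℝ → ℝ} (hg : ContDiff ℝ (⊤ : ℕ∞) (Function.uncurry g)) (L t : ℝ) :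
    HasDerivAt (fun s => ∫ x in (0:ℝ)..L, g x s) (∫ x in (0:ℝ)..L, pdt g x t) t := by
  have hg' := contDiff_pdt hg
  obtain ⟨C, hC⟩ := (isCompact_uIcc.prod (isCompact_closedBall t 1)).exists_bound_of_continuousOn
      hg'.continuous.continuousOn
  refine (intervalIntegral.hasDerivAt_integral_of_dominated_loc_of_deriv_le
      (F := fun s x => g x s) (F' := fun s x => pdt g x s) (bound := fun _ => C)
      (ball_mem_nhds t one_pos) ?_ ?_ ?_ ?_ ?_ ?_).2
  · exact Filter.Eventually.of_forall fun s =>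
      ((contDiff_slice_x hg s).continuous).aestronglyMeasurable
  · exact ((contDiff_slice_x hg t).continuous).intervalIntegrable 0 L
  · exact ((contDiff_slice_x hg' t).continuous).aestronglyMeasurable
  · refine Filter.Eventually.of_forall fun x hx s hs => ?_
    exact hC (x, s) ⟨Set.uIoc_subset_uIcc hx, ball_subset_closedBall hs⟩
  · exact intervalIntegrable_const
  · exact Filter.Eventually.of_forall fun x _ s _ => hasDerivAt_slice_t hg x s

lemma pdt_boundary_zero {f : ℝ → ℝ → ℝ} {x0 : ℝ} (h : ∀ s > (0:ℝ), f x0 s = 0)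
    {t : ℝ} (ht : 0 < t) : pdt f x0 t = 0 := by
  have he : (fun s => f x0 s) =ᶠ[nhds t] fun _ => (0:ℝ) := by
    filter_upwards [Ioi_mem_nhds ht] with s hs using h s hs
  show deriv (fun s => f x0 s) t = 0
  rw [Filter.EventuallyEq.deriv_eq he]
  exact deriv_const t 0

end Helpers

set_option maxHeartbeats 2000000

/-- Estimate for the multiplier functional
`F₁(t) = -(μ/2) ∫ φₜ² dx - κ ∫ φₜₓ φₓ dx` of the vertically-damped system. -/
theorem F1_estimate_vertical (L ρ1 ρ2 κ α ξ1 ξ2 τ0 δ r h μ d : ℝ)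
    (hL : 0 < L) (hρ1 : 0 < ρ1) (hρ2 : 0 < ρ2) (hκ : 0 < κ) (hα : 0 < α)
    (hξ1 : 0 < ξ1) (hξ2 : 0 < ξ2) (hτ0 : 0 < τ0) (hδ : 0 < δ) (hr : 0 < r) (hh : 0 < h)
    (hμ : 0 < μ) (hcrd : τ0 * r - d ^ 2 > 0) :
    ∃ c₀ > (0:ℝ), ∀ φ ψ θ P : ℝ → ℝ → ℝ,
      IsSolutionV L ρ1 ρ2 κ α ξ1 ξ2 τ0 δ r h μ d φ ψ θ P → ∀ ε1 > (0:ℝ), ∀ t > (0:ℝ),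
        deriv (fun s => -((μ / 2) * ∫ x in (0:ℝ)..L, (pdt φ x s) ^ 2)
            - κ * ∫ x in (0:ℝ)..L, pdx (pdt φ) x s * pdx φ x s) t ≤
          -(κ * ∫ x in (0:ℝ)..L, (pdx (pdt φ) x t) ^ 2)
            + ε1 * (∫ x in (0:ℝ)..L, (pdx ψ x t) ^ 2)
            + c₀ * (1 + 1 / ε1) * ∫ x in (0:ℝ)..L, (pdt (pdt φ) x t) ^ 2 := by
  refine ⟨ρ1 + κ ^ 2 / 4, by positivity, ?_⟩
  intro φ ψ θ P hsol ε1 hε1 t ht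
  obtain ⟨hφ, hψ, hθ, hP, hpde, hbc⟩ := hsol
  have hφt : ContDiff ℝ (⊤ : ℕ∞) (Function.uncurry (pdt φ)) := contDiff_pdt hφ
  have hφx : ContDiff ℝ (⊤ : ℕ∞) (Function.uncurry (pdx φ)) := contDiff_pdx hφ
  have hφtt : ContDiff ℝ (⊤ : ℕ∞) (Function.uncurry (pdt (pdt φ))) := contDiff_pdt hφt
  have hφtx : ContDiff ℝ (⊤ : ℕ∞) (Function.uncurry (pdx (pdt φ))) := contDiff_pdx hφt
  have hφxx : ContDiff ℝ (⊤ : ℕ∞) (Function.uncurry (pdx (pdx φ))) := contDiff_pdx hφx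
  have hφttx : ContDiff ℝ (⊤ : ℕ∞) (Function.uncurry (pdx (pdt (pdt φ)))) := contDiff_pdx hφtt
  have hψx : ContDiff ℝ (⊤ : ℕ∞) (Function.uncurry (pdx ψ)) := contDiff_pdx hψ
  -- smoothness of the two integrands
  have hg1 : ContDiff ℝ (⊤ : ℕ∞) (Function.uncurry fun x s => (pdt φ x s) ^ 2) := hφt.pow 2
  have hg2 : ContDiff ℝ (⊤ : ℕ∞) (Function.uncurry fun x s => pdx (pdt φ) x s * pdx φ x s) :=
    hφtx.mul hφx
  -- derivatives of the two integrals
  have h1 := hasDerivAt_intInt hg1 L t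
  have h2 := hasDerivAt_intInt hg2 L t
  have e1 : ∀ x s : ℝ, pdt (fun x s => (pdt φ x s) ^ 2) x s
      = 2 * (pdt φ x s * pdt (pdt φ) x s) := by
    intro x s
    have hd := ((hasDerivAt_slice_t hφt x s).fun_pow 2).deriv
    show deriv (fun s' => (pdt φ x s') ^ 2) s = _
    rw [hd]; ring
  have e2 : ∀ x s : ℝ, pdt (fun x s => pdx (pdt φ) x s * pdx φ x s) x s
      = pdx (pdt (pdt φ)) x s * pdx φ x s + (pdx (pdt φ) x s) ^ 2 := by
    intro x s
    have hd := ((hasDerivAt_slice_t hφtx x s).fun_mul (hasDerivAt_slice_t hφx x s)).deriv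
    show deriv (fun s' => pdx (pdt φ) x s' * pdx φ x s') s = _
    rw [hd, pdx_pdt_comm hφt x s, ← pdx_pdt_comm hφ x s]
    ring
  simp only [e1] at h1
  simp only [e2] at h2
  have hF1 := ((h1.const_mul (μ / 2)).fun_neg).fun_sub (h2.const_mul κ)
  rw [hF1.deriv]
  -- continuity of all the x-slices at time t
  have cA : Continuous fun x => pdt φ x t := (contDiff_slice_x hφt t).continuous
  have cB : Continuous fun x => pdt (pdt φ) x t := (contDiff_slice_x hφtt t).continuous
  have cAx : Continuous fun x => pdx (pdt φ) x t := (contDiff_slice_x hφtx t).continuous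
  have cφx : Continuous fun x => pdx φ x t := (contDiff_slice_x hφx t).continuous
  have cφxx : Continuous fun x => pdx (pdx φ) x t := (contDiff_slice_x hφxx t).continuous
  have cBx : Continuous fun x => pdx (pdt (pdt φ)) x t := (contDiff_slice_x hφttx t).continuous
  have cψx : Continuous fun x => pdx ψ x t := (contDiff_slice_x hψx t).continuous
  -- boundary values
  have hbd0 : pdt (pdt φ) 0 t = 0 :=
    pdt_boundary_zero (fun s hs => pdt_boundary_zero (fun s' hs' => (hbc s' hs'.le).1) hs) ht
  have hbdL : pdt (pdt φ) L t = 0 :=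
    pdt_boundary_zero (fun s hs => pdt_boundary_zero (fun s' hs' => (hbc s' hs'.le).2.1) hs) ht
  -- integration by parts
  have ibp : ∫ x in (0:ℝ)..L, pdx φ x t * pdx (pdt (pdt φ)) x t
      = - ∫ x in (0:ℝ)..L, pdx (pdx φ) x t * pdt (pdt φ) x t := by
    have hp := intervalIntegral.integral_mul_deriv_eq_deriv_mul
      (u := fun x => pdx φ x t) (u' := fun x => pdx (pdx φ) x t)
      (v := fun x => pdt (pdt φ) x t) (v' := fun x => pdx (pdt (pdt φ)) x t)
      (fun x _ => hasDerivAt_slice_x hφx x t) (fun x _ => hasDerivAt_slice_x hφtt x t)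
      (cφxx.intervalIntegrable 0 L) (cBx.intervalIntegrable 0 L)
    rw [hp]
    simp [hbd0, hbdL]
  have comm1 : (∫ x in (0:ℝ)..L, pdx (pdt (pdt φ)) x t * pdx φ x t)
      = ∫ x in (0:ℝ)..L, pdx φ x t * pdx (pdt (pdt φ)) x t :=
    intervalIntegral.integral_congr fun x _ => mul_comm _ _
  -- PDE substitution
  have hsub : ∫ x in (0:ℝ)..L, κ * (pdx (pdx φ) x t * pdt (pdt φ) x t)
      = ∫ x in (0:ℝ)..L, (ρ1 * (pdt (pdt φ) x t) ^ 2 + μ * (pdt φ x t * pdt (pdt φ) x t)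
          - κ * (pdx ψ x t * pdt (pdt φ) x t)) := by
    apply intervalIntegral.integral_congr_ae
    have hne : ∀ᵐ x : ℝ, x ≠ L := by
      rw [MeasureTheory.ae_iff]
      convert Real.volume_singleton (a := L) using 2
      ext x; simp
    filter_upwards [hne] with x hx hmem
    rw [Set.uIoc_of_le hL.le] at hmem
    have hxI : x ∈ Set.Ioo (0:ℝ) L := ⟨hmem.1, lt_of_le_of_ne hmem.2 hx⟩
    have heq := (hpde x hxI t ht).1
    have hsum : pdx (fun y s => pdx φ y s + ψ y s) x t = pdx (pdx φ) x t + pdx ψ x t :=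
      ((hasDerivAt_slice_x hφx x t).add (hasDerivAt_slice_x hψ x t)).deriv
    rw [hsum] at heq
    linear_combination (-pdt (pdt φ) x t) * heq
  -- scalar abbreviations
  set a := ∫ x in (0:ℝ)..L, (pdx (pdt φ) x t) ^ 2 with ha
  set b := ∫ x in (0:ℝ)..L, (pdt (pdt φ) x t) ^ 2 with hb
  set W := ∫ x in (0:ℝ)..L, (pdx ψ x t) ^ 2 with hW
  set cAB := ∫ x in (0:ℝ)..L, pdt φ x t * pdt (pdt φ) x t with hcAB
  set cψB := ∫ x in (0:ℝ)..L, pdx ψ x t * pdt (pdt φ) x t with hcψB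
  set J := ∫ x in (0:ℝ)..L, pdx (pdx φ) x t * pdt (pdt φ) x t with hJ
  -- evaluate pieces
  have i1 : (∫ x in (0:ℝ)..L, 2 * (pdt φ x t * pdt (pdt φ) x t)) = 2 * cAB :=
    intervalIntegral.integral_const_mul 2 _
  have i2 : (∫ x in (0:ℝ)..L, (pdx (pdt (pdt φ)) x t * pdx φ x t + (pdx (pdt φ) x t) ^ 2))
      = -J + a := by
    rw [intervalIntegral.integral_add ((cBx.fun_mul cφx).intervalIntegrable 0 L)
      ((cAx.fun_pow 2).intervalIntegrable 0 L), comm1, ibp]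
  have i3 : (∫ x in (0:ℝ)..L, κ * (pdx (pdx φ) x t * pdt (pdt φ) x t)) = κ * J :=
    intervalIntegral.integral_const_mul κ _
  have i4 : (∫ x in (0:ℝ)..L, (ρ1 * (pdt (pdt φ) x t) ^ 2 + μ * (pdt φ x t * pdt (pdt φ) x t)
      - κ * (pdx ψ x t * pdt (pdt φ) x t))) = ρ1 * b + μ * cAB - κ * cψB := by
    rw [intervalIntegral.integral_sub, intervalIntegral.integral_add,
      intervalIntegral.integral_const_mul, intervalIntegral.integral_const_mul,
      intervalIntegral.integral_const_mul]
    · exact (continuous_const.mul (cB.pow 2)).intervalIntegrable 0 L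
    · exact (continuous_const.mul (cA.mul cB)).intervalIntegrable 0 L
    · exact ((continuous_const.mul (cB.pow 2)).add (continuous_const.mul (cA.mul cB))).intervalIntegrable 0 L
    · exact (continuous_const.mul (cψx.mul cB)).intervalIntegrable 0 L
  have hκJ : κ * J = ρ1 * b + μ * cAB - κ * cψB := by rw [← i3, hsub, i4]
  -- Young's inequality on the integral
  have key : ∀ w B : ℝ, -κ * (w * B) ≤ ε1 * w ^ 2 + κ ^ 2 / (4 * ε1) * B ^ 2 := by
    intro w B
    have hs := sq_nonneg (ε1 * w + (κ / 2) * B)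
    have heq : ε1 * (ε1 * w ^ 2 + κ ^ 2 / (4 * ε1) * B ^ 2 + κ * (w * B))
        = (ε1 * w + (κ / 2) * B) ^ 2 := by field_simp; ring
    nlinarith [hε1, hs, heq]
  have mono : (∫ x in (0:ℝ)..L, -κ * (pdx ψ x t * pdt (pdt φ) x t))
      ≤ ∫ x in (0:ℝ)..L, (ε1 * (pdx ψ x t) ^ 2 + κ ^ 2 / (4 * ε1) * (pdt (pdt φ) x t) ^ 2) := by
    apply intervalIntegral.integral_mono_on hL.le
      ((continuous_const.mul (cψx.mul cB)).intervalIntegrable 0 L)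
      ((continuous_const.mul (cψx.pow 2)).add (continuous_const.mul (cB.pow 2)) |>.intervalIntegrable 0 L)
    intro x _
    exact key _ _
  have mlhs : (∫ x in (0:ℝ)..L, -κ * (pdx ψ x t * pdt (pdt φ) x t)) = -κ * cψB :=
    intervalIntegral.integral_const_mul (-κ) _
  have mrhs : (∫ x in (0:ℝ)..L, (ε1 * (pdx ψ x t) ^ 2 + κ ^ 2 / (4 * ε1) * (pdt (pdt φ) x t) ^ 2))
      = ε1 * W + κ ^ 2 / (4 * ε1) * b := by
    rw [intervalIntegral.integral_add ((continuous_const.fun_mul (cψx.fun_pow 2)).intervalIntegrable 0 L)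
      ((continuous_const.fun_mul (cB.fun_pow 2)).intervalIntegrable 0 L),
      intervalIntegral.integral_const_mul, intervalIntegral.integral_const_mul]
  rw [mlhs, mrhs] at mono
  have hbnn : 0 ≤ b :=
    intervalIntegral.integral_nonneg hL.le fun x _ => sq_nonneg _
  -- final arithmetic
  rw [i1, i2]
  have expand : (ρ1 + κ ^ 2 / 4) * (1 + 1 / ε1)
      = ρ1 + ρ1 / ε1 + κ ^ 2 / 4 + κ ^ 2 / (4 * ε1) := by field_simp; ring
  have h5 : 0 ≤ ρ1 / ε1 := by positivity
  have h6 : 0 ≤ κ ^ 2 / 4 := by positivity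
  nlinarith [mono, hbnn, hκJ, mul_nonneg (add_nonneg h5 h6) hbnn]
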